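/- arXiv:1404.3447 — 7 statements merged into one kernel-verified Lean document; each statement's English description precedes it below -/
import Mathlib

section
/- Let G and H be finite groups with H nontrivial. Let 𝒫 be the set of primes dividing gcd(|G|,|H|) and 𝒩 the set of indices of proper normal subgroups of G. If G is solvable or H is nilpotent, then Λ_{G,H} = 0 if 𝒫 ∩ 𝒩 = ∅, and Λ_{G,H} = 1/min(𝒫 ∩ 𝒩) otherwise. -/
/-! The equalizer of two affine maps `g ↦ a * φ₀ g` and `g ↦ b * ψ₀ g` is either empty or a coset
of `K = Eq(φ₀, ψ₀)`, so their agreement is `0` or `1 / [G : K]`. The core of `K` contains the kernel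
of `(φ₀, ψ₀) : G → H × H`, so `G / core K` is solvable of order dividing `|H|²`; it also embeds into
`Sym (G / K)`, so its order divides `[G : K]!`. A normal subgroup of prime index `q` of
`G / core K` thus pulls back to a normal subgroup of index `q` of `G` with `q ∣ |H|` and
`q ≤ [G : K]`. Conversely, for such a `q`, the map `G ↠ ℤ/q ↪ H` agrees with the trivial
homomorphism exactly on a subgroup of index `q`. -/

/-- An affine homomorphism from `G` to `H` is a function of the form
`g ↦ h * φ₀ g` for a fixed `h : H` and a group homomorphism `φ₀ : G →* H`. -/
def IsAffineHom {G H : Type*} [Group G] [Group H] (φ : G → H) : Prop :=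
  ∃ (h : H) (φ₀ : G →* H), ∀ g : G, φ g = h * φ₀ g

/-- The agreement of two functions `f g : G → H`: the fraction of inputs
on which they agree, `|Eq(f,g)| / |G|`. -/
noncomputable def agr {G H : Type*} (f g : G → H) : ℝ :=
  (Nat.card {x : G // f x = g x} : ℝ) / (Nat.card G : ℝ)

/-- The maximum agreement `Λ_{G,H}`: the maximum of `agr φ ψ` over all pairs of
distinct affine homomorphisms `φ ψ : G → H`. -/
noncomputable def Lambda (G H : Type*) [Group G] [Group H] : ℝ :=
  sSup {r : ℝ | ∃ φ ψ : G → H,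
    IsAffineHom φ ∧ IsAffineHom ψ ∧ φ ≠ ψ ∧ r = agr φ ψ}

open Subgroup

theorem Subgroup.index_normalCore_dvd_factorial {G : Type*} [Group G] (K : Subgroup G)
    [K.FiniteIndex] : K.normalCore.index ∣ K.index.factorial := by
  rw [normalCore_eq_ker, index_ker, index_eq_card, ← Nat.card_perm]
  exact card_subgroup_dvd_card _

theorem exists_normal_index_prime_of_isSolvable (Q : Type*) [Group Q] [Finite Q] [Nontrivial Q]
    [Group.IsSolvable Q] : ∃ M : Subgroup Q, M.Normal ∧ M.index.Prime := by
  obtain ⟨M, ⟨hMn, hMtop⟩, hMmax⟩ := Set.Finite.exists_maximal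
    (s := {M : Subgroup Q | M.Normal ∧ M ≠ ⊤}) (Set.toFinite _) ⟨⊥, inferInstance, bot_ne_top⟩
  refine ⟨M, hMn, ?_⟩
  have : Nontrivial (Q ⧸ M) := QuotientGroup.nontrivial_iff.mpr hMtop
  have : IsSimpleGroup (Q ⧸ M) := by
    refine ⟨fun H hH => ?_⟩
    by_cases hHtop : H.comap (QuotientGroup.mk' M) = ⊤
    · right
      rw [← comap_top (QuotientGroup.mk' M)] at hHtop
      exact comap_injective QuotientGroup.mk_surjective hHtop
    · left
      have hle := hMmax ⟨hH.comap _, hHtop⟩ (QuotientGroup.le_comap_mk' M H)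
      rw [← map_comap_eq_self_of_surjective (QuotientGroup.mk'_surjective M) H, eq_bot_iff,
        ← QuotientGroup.map_mk'_self M]
      exact map_mono hle
  have : IsMulCommutative (Q ⧸ M) := ⟨⟨IsSimpleGroup.comm_iff_isSolvable.mpr inferInstance⟩⟩
  rw [index_eq_card]
  exact Group.is_simple_iff_prime_card.mp ‹_›

theorem Subgroup.exists_normal_index_prime_le {G : Type*} [Group G] {K L : Subgroup G}
    [K.FiniteIndex] [L.Normal] [Group.IsSolvable (G ⧸ L)] (hLK : L ≤ K) (hK : K ≠ ⊤) :
    ∃ N : Subgroup G, N.Normal ∧ N.index.Prime ∧ N.index ≤ K.index ∧ N.index ∣ L.index := by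
  have hLC : L ≤ K.normalCore := normal_le_normalCore.mpr hLK
  have : Group.IsSolvable (G ⧸ K.normalCore) :=
    Group.isSolvable_of_surjective (QuotientGroup.map_surjective_of_surjective (N := L)
      K.normalCore (MonoidHom.id G) QuotientGroup.mk_surjective hLC)
  have : Nontrivial (G ⧸ K.normalCore) :=
    QuotientGroup.nontrivial_iff.mpr fun h => hK (top_le_iff.mp (h ▸ K.normalCore_le))
  obtain ⟨M, hMn, hM⟩ := exists_normal_index_prime_of_isSolvable (G ⧸ K.normalCore)
  have hN : (M.comap (QuotientGroup.mk' K.normalCore)).index = M.index :=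
    index_comap_of_surjective _ QuotientGroup.mk_surjective
  have hMC : M.index ∣ K.normalCore.index := index_eq_card K.normalCore ▸ M.index_dvd_card
  refine ⟨_, hMn.comap _, hN ▸ hM, hN ▸ ?_, hN ▸ hMC.trans (index_dvd_of_le hLC)⟩
  exact (hM.dvd_factorial).mp (hMC.trans K.index_normalCore_dvd_factorial)

theorem agr_nonneg {G H : Type*} (f g : G → H) : 0 ≤ agr f g := by
  unfold agr
  positivity

theorem agr_eq_zero {G H : Type*} {f g : G → H} (h : ∀ x, f x ≠ g x) : agr f g = 0 := by
  have : IsEmpty {x // f x = g x} := ⟨fun x => h x.1 x.2⟩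
  simp [agr]

section Affine

variable {G H : Type*} [Group G] [Group H]

theorem MonoidHom.isAffineHom (f : G →* H) : IsAffineHom f :=
  ⟨1, f, fun _ => (one_mul _).symm⟩

theorem agr_eq_one_div_index [Finite G] {φ ψ : G → H} {a b : H} {φ₀ ψ₀ : G →* H}
    (hφ : ∀ x, φ x = a * φ₀ x) (hψ : ∀ x, ψ x = b * ψ₀ x) {x₀ : G} (hx₀ : φ x₀ = ψ x₀) :
    agr φ ψ = 1 / (φ₀.eqLocus ψ₀).index := by
  have hlin : ∀ (c : H) (f : G →* H) (χ : G → H), (∀ x, χ x = c * f x) →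
      ∀ x, (χ x₀)⁻¹ * χ x = f (x₀⁻¹ * x) := by
    intro c f χ hχ x
    rw [hχ, hχ, map_mul, map_inv]
    group
  -- the equalizer of `φ` and `ψ` is the coset `x₀ • φ₀.eqLocus ψ₀`
  have hcard : Nat.card {x // φ x = ψ x} = Nat.card (φ₀.eqLocus ψ₀) := by
    refine Nat.card_congr (Equiv.subtypeEquiv (Equiv.mulLeft x₀⁻¹) fun x => ?_)
    rw [← mul_right_inj (φ x₀)⁻¹, hlin a φ₀ φ hφ, hx₀, hlin b ψ₀ ψ hψ]
    rfl
  rw [agr, hcard, ← (φ₀.eqLocus ψ₀).card_mul_index]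
  have : (Nat.card (φ₀.eqLocus ψ₀) : ℝ) ≠ 0 := Nat.cast_ne_zero.mpr Nat.card_pos.ne'
  push_cast
  field_simp

theorem exists_prime_agr_le [Finite G] [Finite H] (hGH : Group.IsSolvable G ∨ Group.IsNilpotent H)
    {φ ψ : G → H} (hφ : IsAffineHom φ) (hψ : IsAffineHom ψ) (hne : φ ≠ ψ)
    {x₀ : G} (hx₀ : φ x₀ = ψ x₀) :
    ∃ q : ℕ, q.Prime ∧ q ∣ Nat.gcd (Nat.card G) (Nat.card H) ∧
      (∃ K : Subgroup G, K.Normal ∧ K ≠ ⊤ ∧ K.index = q) ∧ agr φ ψ ≤ 1 / q := by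
  obtain ⟨a, φ₀, hφ⟩ := hφ
  obtain ⟨b, ψ₀, hψ⟩ := hψ
  have hK : φ₀.eqLocus ψ₀ ≠ ⊤ := by
    intro hK
    obtain rfl : φ₀ = ψ₀ := MonoidHom.ext fun x => (hK ▸ mem_top x : x ∈ φ₀.eqLocus ψ₀)
    have hab : a = b := mul_right_cancel ((hφ x₀).symm.trans (hx₀.trans (hψ x₀)))
    exact hne (funext fun x => by rw [hφ, hψ, hab])
  have hLK : (φ₀.prod ψ₀).ker ≤ φ₀.eqLocus ψ₀ := fun x hx =>
    (congrArg Prod.fst hx).trans (congrArg Prod.snd hx).symm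
  have : Group.IsSolvable (G ⧸ (φ₀.prod ψ₀).ker) := by
    rcases hGH with hG | hH
    · infer_instance
    · exact Group.isSolvable_of_isSolvable_injective (QuotientGroup.kerLift_injective (φ₀.prod ψ₀))
  obtain ⟨N, hNn, hNp, hNK, hNL⟩ := exists_normal_index_prime_le hLK hK
  have hNH : N.index ∣ Nat.card H := by
    have : N.index ∣ Nat.card H * Nat.card H := by
      rw [← Nat.card_prod]
      exact hNL.trans (by rw [index_ker]; exact card_subgroup_dvd_card _)
    exact (hNp.dvd_mul.mp this).elim id id
  refine ⟨N.index, hNp, Nat.dvd_gcd N.index_dvd_card hNH,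
    ⟨N, hNn, fun h => hNp.ne_one (h ▸ index_top), rfl⟩, ?_⟩
  rw [agr_eq_one_div_index hφ hψ hx₀]
  have := hNp.pos
  gcongr

theorem exists_affineHom_pair_agr_eq [Finite G] [Finite H] {p : ℕ} (hp : p.Prime)
    (hpH : p ∣ Nat.card H) {K : Subgroup G} [K.Normal] (hK : K.index = p) :
    ∃ φ ψ : G → H, IsAffineHom φ ∧ IsAffineHom ψ ∧ φ ≠ ψ ∧ agr φ ψ = 1 / p := by
  have : Fact p.Prime := ⟨hp⟩
  obtain ⟨C, hC⟩ := Sylow.exists_subgroup_card_pow_prime p ((pow_one p).symm ▸ hpH)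
  let e : G ⧸ K ≃* C := mulEquivOfPrimeCardEq (index_eq_card K ▸ hK) (hC.trans (pow_one p))
  let φ₀ : G →* H := C.subtype.comp (e.toMonoidHom.comp (QuotientGroup.mk' K))
  have hφ₀ : φ₀.eqLocus 1 = K := by
    ext x
    change φ₀ x = 1 ↔ x ∈ K
    simp [φ₀]
  refine ⟨φ₀, (1 : G →* H), φ₀.isAffineHom, MonoidHom.isAffineHom 1, fun h => ?_, ?_⟩
  · rw [← hφ₀, MonoidHom.ext (congrFun h), MonoidHom.eqLocus_same, index_top] at hK
    exact hp.ne_one hK.symm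
  · rw [agr_eq_one_div_index (a := 1) (b := 1) (φ₀ := φ₀) (ψ₀ := 1) (fun x => (one_mul _).symm)
      (fun x => (one_mul _).symm) (x₀ := 1) (by simp), hφ₀, hK]

end Affine

theorem main_formula_general (G H : Type*) [Group G] [Group H] [Finite G] [Finite H]
    (hGH : IsSolvable G ∨ Group.IsNilpotent H)
    (P : Set ℕ) (hP : P = {p : ℕ | p.Prime ∧ p ∣ Nat.gcd (Nat.card G) (Nat.card H)})
    (N : Set ℕ)
    (hN : N = {m : ℕ | ∃ K : Subgroup G, K.Normal ∧ K ≠ ⊤ ∧ K.index = m}) :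
    (P ∩ N = ∅ → Lambda G H = 0) ∧
    ((P ∩ N).Nonempty → Lambda G H = 1 / ((sInf (P ∩ N) : ℕ) : ℝ)) := by
  have hnonneg : 0 ≤ Lambda G H :=
    Real.sSup_nonneg fun _ ⟨φ, ψ, _, _, _, hr⟩ => hr ▸ agr_nonneg φ ψ
  have hbound : ∀ φ ψ : G → H, IsAffineHom φ → IsAffineHom ψ → φ ≠ ψ →
      agr φ ψ = 0 ∨ ∃ q ∈ P ∩ N, agr φ ψ ≤ 1 / q := by
    intro φ ψ hφ hψ hne
    by_cases h : ∃ x, φ x = ψ x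
    · obtain ⟨x₀, hx₀⟩ := h
      obtain ⟨q, hq, hqd, hqN, hle⟩ := exists_prime_agr_le hGH hφ hψ hne hx₀
      exact Or.inr ⟨q, hP ▸ hN ▸ ⟨⟨hq, hqd⟩, hqN⟩, hle⟩
    · exact Or.inl (agr_eq_zero (not_exists.mp h))
  constructor
  · intro hPN
    refine le_antisymm (Real.sSup_nonpos ?_) hnonneg
    rintro r ⟨φ, ψ, hφ, hψ, hne, rfl⟩
    rcases hbound φ ψ hφ hψ hne with h | ⟨q, hq, -⟩
    · exact h.le
    · exact absurd hq (hPN ▸ Set.notMem_empty q)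
  · intro hPN
    set p := sInf (P ∩ N)
    have hmem : p ∈ P ∩ N := Nat.sInf_mem hPN
    rw [hP, hN] at hmem
    obtain ⟨⟨hp, hpd⟩, K, hKn, -, hK⟩ := hmem
    obtain ⟨φ, ψ, hφ, hψ, hne, hagr⟩ :=
      exists_affineHom_pair_agr_eq (G := G) hp (hpd.trans (Nat.gcd_dvd_right _ _)) hK
    refine IsGreatest.csSup_eq ⟨⟨φ, ψ, hφ, hψ, hne, hagr.symm⟩, ?_⟩
    rintro r ⟨φ, ψ, hφ, hψ, hne, rfl⟩
    rcases hbound φ ψ hφ hψ hne with h | ⟨q, hq, hr⟩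
    · exact h.le.trans (by positivity)
    · exact hr.trans (one_div_le_one_div_of_le (by exact_mod_cast hp.pos)
        (by exact_mod_cast Nat.sInf_le hq))

theorem main_formula (G H : Type*) [Group G] [Group H] [Finite G] [Finite H]
    [Nontrivial H] (hGH : IsSolvable G ∨ Group.IsNilpotent H)
    (P : Set ℕ) (hP : P = {p : ℕ | p.Prime ∧ p ∣ Nat.gcd (Nat.card G) (Nat.card H)})
    (N : Set ℕ)
    (hN : N = {m : ℕ | ∃ K : Subgroup G, K.Normal ∧ K ≠ ⊤ ∧ K.index = m}) :
    (P ∩ N = ∅ → Lambda G H = 0) ∧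
    ((P ∩ N).Nonempty → Lambda G H = 1 / ((sInf (P ∩ N) : ℕ) : ℝ)) :=
  main_formula_general G H hGH P hP N hN
end

section
/- Let G be a finite group and H a finite nilpotent nontrivial group. If p is the smallest prime divisor of gcd(|G|,|H|) such that G has a normal subgroup of index p, then Λ_{G,H} = 1/p. -/
open Subgroup

theorem CommGroup.exists_subgroup_prime_index {A : Type*} [CommGroup A] [Finite A]
    [Nontrivial A] : ∃ M : Subgroup A, M.index.Prime := by
  obtain ⟨M, hM⟩ := IsCoatomic.exists_coatom (α := Subgroup A)
  let e : Subgroup (A ⧸ M) ≃o Set.Ici M := QuotientGroup.comapMk'OrderIso M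
  have : IsSimpleOrder (Subgroup (A ⧸ M)) :=
    e.isSimpleOrder_iff.mpr (Set.isSimpleOrder_Ici_iff_isCoatom.mpr hM)
  have : IsSimpleGroup (A ⧸ M) :=
    { toNontrivial := nontrivial_iff.mp inferInstance
      eq_bot_or_eq_top_of_normal := fun H _ => IsSimpleOrder.eq_bot_or_eq_top H }
  exact ⟨M, M.index_eq_card ▸ IsSimpleGroup.prime_card⟩

namespace MonoidHom

variable {G H : Type*} [Group G] [Group H]

theorem exists_normal_prime_index_ker_le {A : Type*} [CommGroup A] [Finite A] (δ : G →* A)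
    (hδ : δ ≠ 1) :
    ∃ K : Subgroup G, K.Normal ∧ K.index.Prime ∧ K.index ∣ Nat.card A ∧ δ.ker ≤ K := by
  have : Nontrivial δ.range := by
    rw [nontrivial_iff_ne_bot, Ne, range_eq_bot_iff]
    exact hδ
  obtain ⟨M, hM⟩ := CommGroup.exists_subgroup_prime_index (A := δ.range)
  refine ⟨M.comap δ.rangeRestrict, inferInstance, ?_, ?_, ?_⟩
  · rwa [index_comap_of_surjective _ δ.rangeRestrict_surjective]
  · rw [index_comap_of_surjective _ δ.rangeRestrict_surjective]
    exact M.index_dvd_card.trans δ.range.card_subgroup_dvd_card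
  · rw [← ker_rangeRestrict]
    exact ker_le_comap _ _

def centralDiff (φ ψ : G →* H) (h : ∀ x, (φ x)⁻¹ * ψ x ∈ center H) : G →* center H where
  toFun x := ⟨(φ x)⁻¹ * ψ x, h x⟩
  map_one' := by ext; simp
  map_mul' x y := by
    ext
    have hcomm := mem_center_iff.mp (h x) (φ y)⁻¹
    simp only [map_mul, mul_inv_rev, coe_mul]
    calc (φ y)⁻¹ * (φ x)⁻¹ * (ψ x * ψ y) = (φ y)⁻¹ * ((φ x)⁻¹ * ψ x) * ψ y := by group
      _ = (φ x)⁻¹ * ψ x * ((φ y)⁻¹ * ψ y) := by rw [hcomm]; group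

theorem ker_centralDiff (φ ψ : G →* H) (h : ∀ x, (φ x)⁻¹ * ψ x ∈ center H) :
    (centralDiff φ ψ h).ker = φ.eqLocus ψ := by
  ext x
  simp only [mem_ker, centralDiff, coe_mk, OneHom.coe_mk, Subtype.ext_iff, OneMemClass.coe_one,
    inv_mul_eq_one]
  rfl

open scoped IsMulCommutative in
theorem exists_normal_prime_index_eqLocus_le [Group.IsNilpotent H] [Finite H] (φ ψ : G →* H)
    (hne : φ ≠ ψ) :
    ∃ K : Subgroup G, K.Normal ∧ K.index.Prime ∧ K.index ∣ Nat.card H ∧ φ.eqLocus ψ ≤ K := by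
  revert φ ψ
  refine Group.nilpotent_center_quotient_ind
    (P := fun H _ _ => ∀ [Finite H] (φ ψ : G →* H), φ ≠ ψ → ∃ K : Subgroup G,
      K.Normal ∧ K.index.Prime ∧ K.index ∣ Nat.card H ∧ φ.eqLocus ψ ≤ K) H
    (fun H _ _ _ φ ψ hne => absurd (ext fun _ => Subsingleton.elim _ _) hne) ?_
  intro H _ _ ih _ φ ψ hne
  by_cases hc : ∀ x, (φ x)⁻¹ * ψ x ∈ center H
  · have hδ : centralDiff φ ψ hc ≠ 1 := by
      intro h
      apply hne
      refine eq_of_eqOn_top fun x _ => ?_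
      show x ∈ φ.eqLocus ψ
      rw [← ker_centralDiff φ ψ hc, h, ker_one]
      trivial
    obtain ⟨K, hK, hKp, hKA, hker⟩ := exists_normal_prime_index_ker_le _ hδ
    exact ⟨K, hK, hKp, hKA.trans (center H).card_subgroup_dvd_card,
      ker_centralDiff φ ψ hc ▸ hker⟩
  · push Not at hc
    obtain ⟨x, hx⟩ := hc
    let π := QuotientGroup.mk' (center H)
    have hne' : π.comp φ ≠ π.comp ψ := fun h => hx (QuotientGroup.eq.mp (DFunLike.congr_fun h x))
    obtain ⟨K, hK, hKp, hKH, hle⟩ := ih (π.comp φ) (π.comp ψ) hne'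
    refine ⟨K, hK, hKp, hKH.trans (card_quotient_dvd_card _), le_trans ?_ hle⟩
    intro y hy
    exact congrArg π hy

end MonoidHom

section Agreement

variable {G H : Type*} [Group G] [Group H]

theorem IsAffineHom.exists_map_mul {φ : G → H} (hφ : IsAffineHom φ) :
    ∃ φ₀ : G →* H, ∀ x y, φ (x * y) = φ x * φ₀ y := by
  obtain ⟨h, φ₀, hφ⟩ := hφ
  exact ⟨φ₀, fun x y => by rw [hφ, hφ, map_mul, mul_assoc]⟩

/-- A nonempty equalizer of two affine homomorphisms is a coset of the equalizer of their
linear parts. -/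
theorem IsAffineHom.exists_card_eq_card_eqLocus {φ ψ : G → H} (hφ : IsAffineHom φ)
    (hψ : IsAffineHom ψ) (hne : φ ≠ ψ) {x₀ : G} (hx₀ : φ x₀ = ψ x₀) :
    ∃ φ₀ ψ₀ : G →* H, φ₀ ≠ ψ₀ ∧ Nat.card {x // φ x = ψ x} = Nat.card (φ₀.eqLocus ψ₀) := by
  obtain ⟨φ₀, hφ₀⟩ := hφ.exists_map_mul
  obtain ⟨ψ₀, hψ₀⟩ := hψ.exists_map_mul
  have heq : ∀ y, φ (x₀ * y) = ψ (x₀ * y) ↔ φ₀ y = ψ₀ y := fun y => by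
    rw [hφ₀, hψ₀, hx₀, mul_right_inj]
  refine ⟨φ₀, ψ₀, fun h => hne (funext fun x => ?_), ?_⟩
  · simpa using (heq (x₀⁻¹ * x)).mpr (h ▸ rfl)
  · exact Nat.card_congr ((Equiv.mulLeft x₀).subtypeEquiv fun y => (heq y).symm).symm

theorem Subgroup.card_div_card_eq_one_div_index [Finite G] (K : Subgroup G) :
    (Nat.card K : ℝ) / Nat.card G = 1 / K.index := by
  have hK : (Nat.card K : ℝ) ≠ 0 := by exact_mod_cast Nat.card_pos.ne'
  rw [← K.card_mul_index, Nat.cast_mul, div_mul_cancel_left₀ hK, one_div]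

theorem Subgroup.exists_monoidHom_ker_eq_of_index_prime [Finite H] (K : Subgroup G) [K.Normal]
    (hK : K.index.Prime) (hdvd : K.index ∣ Nat.card H) : ∃ φ : G →* H, φ.ker = K := by
  have : Fact K.index.Prime := ⟨hK⟩
  obtain ⟨h, hh⟩ := exists_prime_orderOf_dvd_card' K.index hdvd
  let e : G ⧸ K ≃* zpowers h :=
    mulEquivOfPrimeCardEq K.index_eq_card.symm (by rw [Nat.card_zpowers, hh])
  refine ⟨(zpowers h).subtype.comp (e.toMonoidHom.comp (QuotientGroup.mk' K)), ?_⟩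
  rw [MonoidHom.ker_comp_of_injective _ _ (zpowers h).subtype_injective,
    MonoidHom.ker_comp_of_injective _ _ e.injective, QuotientGroup.ker_mk']

theorem agr_monoidHom_one (φ : G →* H) :
    agr φ (fun _ => 1) = Nat.card φ.ker / Nat.card G :=
  congrArg (· / _) (congrArg _ (Nat.card_congr (Equiv.subtypeEquivRight fun _ => φ.mem_ker.symm)))

theorem agr_le_of_forall_le_index [Finite G] [Finite H] [Group.IsNilpotent H] {φ ψ : G → H}
    (hφ : IsAffineHom φ) (hψ : IsAffineHom ψ) (hne : φ ≠ ψ) {p : ℕ} (hp : 0 < p)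
    (hmin : ∀ K : Subgroup G, K.Normal → K.index.Prime → K.index ∣ Nat.card H → p ≤ K.index) :
    agr φ ψ ≤ 1 / p := by
  rcases isEmpty_or_nonempty {x // φ x = ψ x} with _ | ⟨⟨x₀, hx₀⟩⟩
  · rw [agr, Nat.card_of_isEmpty, Nat.cast_zero, zero_div]
    positivity
  obtain ⟨φ₀, ψ₀, hne₀, hcard⟩ := hφ.exists_card_eq_card_eqLocus hψ hne hx₀
  obtain ⟨K, hK, hKp, hKH, hle⟩ := φ₀.exists_normal_prime_index_eqLocus_le ψ₀ hne₀
  calc agr φ ψ = Nat.card (φ₀.eqLocus ψ₀) / Nat.card G := by rw [agr, hcard]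
    _ ≤ Nat.card K / Nat.card G := by
      gcongr
      exact Nat.card_mono (Set.toFinite _) hle
    _ = 1 / K.index := K.card_div_card_eq_one_div_index
    _ ≤ 1 / p := by
      gcongr
      exact hmin K hK hKp hKH

end Agreement

theorem nilpotent_codomain_lambda_general (G H : Type*) [Group G] [Group H]
    [Finite G] [Finite H] [Group.IsNilpotent H]
    (p : ℕ) (hp : p.Prime) (hdvd : p ∣ Nat.gcd (Nat.card G) (Nat.card H))
    (hex : ∃ K : Subgroup G, K.Normal ∧ K.index = p)
    (hmin : ∀ q : ℕ, q.Prime → q ∣ Nat.gcd (Nat.card G) (Nat.card H) →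
      (∃ K : Subgroup G, K.Normal ∧ K.index = q) → p ≤ q) :
    Lambda G H = 1 / (p : ℝ) := by
  obtain ⟨K, hK, rfl⟩ := hex
  obtain ⟨φ, hφ⟩ := K.exists_monoidHom_ker_eq_of_index_prime hp
    (hdvd.trans (Nat.gcd_dvd_right _ _))
  have hφ_ne : ⇑φ ≠ fun _ => 1 := fun h => hp.ne_one <| by
    rw [← hφ, MonoidHom.ker_eq_top_iff.mpr (MonoidHom.ext (congrFun h)), index_top]
  refine IsGreatest.csSup_eq ⟨⟨φ, fun _ => 1, ⟨1, φ, fun _ => (one_mul _).symm⟩,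
    ⟨1, 1, fun _ => (one_mul _).symm⟩, hφ_ne, ?_⟩, ?_⟩
  · rw [agr_monoidHom_one, hφ, K.card_div_card_eq_one_div_index]
  · rintro r ⟨φ, ψ, hφ, hψ, hne, rfl⟩
    exact agr_le_of_forall_le_index hφ hψ hne hp.pos fun L hL hLp hLH =>
      hmin _ hLp (Nat.dvd_gcd L.index_dvd_card hLH) ⟨L, hL, rfl⟩

theorem nilpotent_codomain_lambda (G H : Type*) [Group G] [Group H]
    [Finite G] [Finite H] [Nontrivial H] [Group.IsNilpotent H]
    (p : ℕ) (hp : p.Prime) (hdvd : p ∣ Nat.gcd (Nat.card G) (Nat.card H))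
    (hex : ∃ K : Subgroup G, K.Normal ∧ K.index = p)
    (hmin : ∀ q : ℕ, q.Prime → q ∣ Nat.gcd (Nat.card G) (Nat.card H) →
      (∃ K : Subgroup G, K.Normal ∧ K.index = q) → p ≤ q) :
    Lambda G H = 1 / (p : ℝ) :=
  nilpotent_codomain_lambda_general G H p hp hdvd hex hmin
end

section
/- Let G be a finite solvable group and H any finite nontrivial group. If p is the smallest prime divisor of gcd(|G|,|H|) such that G has a normal subgroup of index p, then Λ_{G,H} = 1/p. -/
/-!
Two distinct affine maps that agree somewhere agree, after a translation, exactly on the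
equalizer `E` of two distinct homomorphisms `α β : G →* H`, so their agreement is `1 / [G : E]`.
The normal core `K` of `E` contains `ker α ⊓ ker β`, so `|G/K|` divides `|H|²`; and `G/K` acts
faithfully on `G/E`, so `|G/K|` divides `[G : E]!`. The nontrivial solvable group `G/K` has a
normal subgroup of prime index `q`, hence `q` divides `gcd(|G|, |H|)` and `q ≤ [G : E]`, so
`p ≤ [G : E]`. Conversely, a normal subgroup of index `p` is the kernel of a homomorphism onto a
subgroup of `H` of order `p` (Cauchy), which agrees with the trivial homomorphism exactly there.
-/

open Subgroup

theorem Group.IsSolvable.exists_normal_prime_index (Q : Type*) [Group Q] [Finite Q] [Nontrivial Q]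
    [Group.IsSolvable Q] : ∃ N : Subgroup Q, N.Normal ∧ N.index.Prime := by
  obtain ⟨M, hM, hcM⟩ := (eq_top_or_exists_le_coatom (commutator Q)).resolve_left
    (IsSolvable.commutator_lt_top_of_nontrivial Q).ne
  have hMnormal : M.Normal := commutator_top_left_le_iff.mp <|
    (commutator_mono le_rfl le_top).trans (commutator_def Q ▸ hcM)
  have hsimple : IsSimpleGroup (Q ⧸ M) :=
    { toNontrivial := QuotientGroup.nontrivial_iff.mpr hM.1
      eq_bot_or_eq_top_of_normal := fun L _ => by
        have hcomap := comap_injective (f := QuotientGroup.mk' M) (QuotientGroup.mk'_surjective M)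
        rcases hM.le_iff.mp (QuotientGroup.ker_mk' M ▸ L.ker_le_comap (QuotientGroup.mk' M))
          with h | h
        · exact .inr (hcomap (h.trans (comap_top _).symm))
        · exact .inl (hcomap (h.trans (by rw [MonoidHom.comap_bot, QuotientGroup.ker_mk']))) }
  have : IsMulCommutative (Q ⧸ M) := ⟨⟨IsSimpleGroup.comm_iff_isSolvable.mpr inferInstance⟩⟩
  exact ⟨M, hMnormal, index_eq_card M ▸ Group.is_simple_iff_prime_card.mp hsimple⟩

theorem Subgroup.index_normalCore_dvd_factorial_s2 {G : Type*} [Group G] (E : Subgroup G)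
    [Finite (G ⧸ E)] : E.normalCore.index ∣ E.index.factorial := by
  rw [normalCore_eq_ker, index_ker, index_eq_card, ← Nat.card_perm]
  exact card_subgroup_dvd_card _

theorem Subgroup.exists_normal_prime_index_dvd_index_normalCore {G : Type*} [Group G] [Finite G]
    [Group.IsSolvable G] (E : Subgroup G) (hE : E ≠ ⊤) :
    ∃ N : Subgroup G, N.Normal ∧ N.index.Prime ∧ N.index ∣ E.normalCore.index := by
  have : Nontrivial (G ⧸ E.normalCore) := QuotientGroup.nontrivial_iff.mpr
    fun h => hE (top_le_iff.mp (h ▸ E.normalCore_le))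
  obtain ⟨N, hN, hNp⟩ := Group.IsSolvable.exists_normal_prime_index (G ⧸ E.normalCore)
  have hidx : (N.comap (QuotientGroup.mk' E.normalCore)).index = N.index :=
    index_comap_of_surjective _ (QuotientGroup.mk'_surjective _)
  refine ⟨N.comap (QuotientGroup.mk' E.normalCore), normal_comap _, hidx ▸ hNp, ?_⟩
  rw [hidx, index_eq_card E.normalCore]
  exact N.index_dvd_card

theorem MonoidHom.index_normalCore_eqLocus_dvd_card_sq {G H : Type*} [Group G] [Group H]
    (α β : G →* H) : (α.eqLocus β).normalCore.index ∣ Nat.card H ^ 2 := by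
  have hker : α.ker ⊓ β.ker ≤ (α.eqLocus β).normalCore :=
    (normal_le_normalCore (hN := normal_inf_normal _ _)).mpr
      fun x hx => (hx.1.trans hx.2.symm : α x = β x)
  calc (α.eqLocus β).normalCore.index ∣ (α.ker ⊓ β.ker).index := index_dvd_of_le hker
    _ = Nat.card (α.prod β).range := by rw [← MonoidHom.ker_prod, index_ker]
    _ ∣ Nat.card (H × H) := card_subgroup_dvd_card _
    _ = Nat.card H ^ 2 := by rw [Nat.card_prod, sq]

theorem MonoidHom.exists_prime_le_index_eqLocus {G H : Type*} [Group G] [Group H] [Finite G]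
    [Group.IsSolvable G] {α β : G →* H} (hne : α ≠ β) :
    ∃ q : ℕ, q.Prime ∧ q ∣ Nat.gcd (Nat.card G) (Nat.card H) ∧
      (∃ K : Subgroup G, K.Normal ∧ K.index = q) ∧ q ≤ (α.eqLocus β).index := by
  have hE : α.eqLocus β ≠ ⊤ := fun h => hne (MonoidHom.ext fun x => (h ▸ mem_top x :))
  obtain ⟨N, hN, hq, hdvd⟩ := (α.eqLocus β).exists_normal_prime_index_dvd_index_normalCore hE
  refine ⟨N.index, hq, Nat.dvd_gcd N.index_dvd_card ?_, ⟨N, hN, rfl⟩, ?_⟩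
  · exact hq.dvd_of_dvd_pow (hdvd.trans (α.index_normalCore_eqLocus_dvd_card_sq β))
  · exact hq.dvd_factorial.mp (hdvd.trans (α.eqLocus β).index_normalCore_dvd_factorial_s2)

theorem MonoidHom.isAffineHom_s2 {G H : Type*} [Group G] [Group H] (α : G →* H) : IsAffineHom α :=
  ⟨1, α, fun _ => (one_mul _).symm⟩

theorem MonoidHom.agr_eq_one_div_index_eqLocus {G H : Type*} [Group G] [Group H] [Finite G]
    (α β : G →* H) : agr α β = 1 / (α.eqLocus β).index := by
  have hcard : (Nat.card G : ℝ) = Nat.card (α.eqLocus β) * (α.eqLocus β).index := by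
    exact_mod_cast (card_mul_index (α.eqLocus β)).symm
  have hpos : (0 : ℝ) < Nat.card (α.eqLocus β) := by exact_mod_cast Nat.card_pos
  change (Nat.card (α.eqLocus β) : ℝ) / Nat.card G = _
  rw [hcard, ← div_div, div_self hpos.ne']

theorem IsAffineHom.agr_eq_zero_or_exists_monoidHom {G H : Type*} [Group G] [Group H]
    {φ ψ : G → H} (hφ : IsAffineHom φ) (hψ : IsAffineHom ψ) (hne : φ ≠ ψ) :
    agr φ ψ = 0 ∨ ∃ α β : G →* H, α ≠ β ∧ agr φ ψ = agr α β := by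
  obtain ⟨a, α, hα⟩ := hφ
  obtain ⟨b, β, hβ⟩ := hψ
  by_cases hagree : ∃ x₀, φ x₀ = ψ x₀
  · obtain ⟨x₀, hx₀⟩ := hagree
    have htranslate (y : G) : α y = β y ↔ φ (x₀ * y) = ψ (x₀ * y) := by
      rw [hα, hβ, map_mul, map_mul, ← mul_assoc, ← mul_assoc, ← hα, ← hβ, hx₀, mul_left_cancel_iff]
    refine .inr ⟨α, β, fun hαβ => hne (funext fun _ => ?_), ?_⟩
    · rw [hα, hβ, hαβ] at hx₀ ⊢
      rw [mul_right_cancel hx₀]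
    · rw [agr, agr, Nat.card_congr ((Equiv.mulLeft x₀).subtypeEquiv htranslate).symm]
  · have : IsEmpty {x // φ x = ψ x} := ⟨fun x => hagree ⟨x.1, x.2⟩⟩
    exact .inl (by rw [agr, Nat.card_of_isEmpty, Nat.cast_zero, zero_div])

theorem IsAffineHom.agr_le {G H : Type*} [Group G] [Group H] [Finite G] [Group.IsSolvable G]
    {p : ℕ} (hp : 0 < p)
    (hmin : ∀ q : ℕ, q.Prime → q ∣ Nat.gcd (Nat.card G) (Nat.card H) →
      (∃ K : Subgroup G, K.Normal ∧ K.index = q) → p ≤ q)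
    {φ ψ : G → H} (hφ : IsAffineHom φ) (hψ : IsAffineHom ψ) (hne : φ ≠ ψ) :
    agr φ ψ ≤ 1 / p := by
  rcases hφ.agr_eq_zero_or_exists_monoidHom hψ hne with h | ⟨α, β, hαβ, h⟩
  · rw [h]
    positivity
  · obtain ⟨q, hq, hqdvd, hqK, hqle⟩ := MonoidHom.exists_prime_le_index_eqLocus hαβ
    rw [h, α.agr_eq_one_div_index_eqLocus]
    gcongr
    exact (hmin q hq hqdvd hqK).trans hqle

theorem MonoidHom.exists_ker_eq_of_index_prime {G H : Type*} [Group G] [Group H] [Finite H]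
    {K : Subgroup G} [K.Normal] {p : ℕ} (hp : p.Prime) (hK : K.index = p) (hpH : p ∣ Nat.card H) :
    ∃ χ : G →* H, χ.ker = K := by
  have : Fact p.Prime := ⟨hp⟩
  obtain ⟨h, hh⟩ := exists_prime_orderOf_dvd_card' p hpH
  let ι : G ⧸ K ≃* zpowers h :=
    mulEquivOfPrimeCardEq (index_eq_card K ▸ hK) (Nat.card_zpowers h ▸ hh)
  refine ⟨((zpowers h).subtype.comp ι.toMonoidHom).comp (QuotientGroup.mk' K), ?_⟩
  rw [MonoidHom.ker_comp_of_injective _ _ (Subtype.val_injective.comp ι.injective),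
    QuotientGroup.ker_mk']

theorem solvable_domain_lambda_general (G H : Type*) [Group G] [Group H]
    [Finite G] [Finite H] [Group.IsSolvable G]
    (p : ℕ) (hp : p.Prime) (hdvd : p ∣ Nat.gcd (Nat.card G) (Nat.card H))
    (hex : ∃ K : Subgroup G, K.Normal ∧ K.index = p)
    (hmin : ∀ q : ℕ, q.Prime → q ∣ Nat.gcd (Nat.card G) (Nat.card H) →
      (∃ K : Subgroup G, K.Normal ∧ K.index = q) → p ≤ q) :
    Lambda G H = 1 / (p : ℝ) := by
  obtain ⟨K, hK, hKp⟩ := hex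
  obtain ⟨χ, hχ⟩ := MonoidHom.exists_ker_eq_of_index_prime hp hKp
    (hdvd.trans (Nat.gcd_dvd_right _ _))
  have hχ1 : χ.eqLocus 1 = K := hχ ▸ Subgroup.ext fun _ => Iff.rfl
  refine IsGreatest.csSup_eq
    ⟨⟨χ, ⇑(1 : G →* H), χ.isAffineHom_s2, MonoidHom.isAffineHom_s2 1, ?_, ?_⟩, ?_⟩
  · intro h
    exact hp.ne_one (by rw [← hKp, ← hχ, DFunLike.coe_injective h, MonoidHom.ker_one, index_top])
  · rw [χ.agr_eq_one_div_index_eqLocus, hχ1, hKp]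
  · rintro r ⟨φ, ψ, hφ, hψ, hne, rfl⟩
    exact hφ.agr_le hp.pos hmin hψ hne

theorem solvable_domain_lambda (G H : Type*) [Group G] [Group H]
    [Finite G] [Finite H] [Nontrivial H] [Group.IsSolvable G]
    (p : ℕ) (hp : p.Prime) (hdvd : p ∣ Nat.gcd (Nat.card G) (Nat.card H))
    (hex : ∃ K : Subgroup G, K.Normal ∧ K.index = p)
    (hmin : ∀ q : ℕ, q.Prime → q ∣ Nat.gcd (Nat.card G) (Nat.card H) →
      (∃ K : Subgroup G, K.Normal ∧ K.index = q) → p ≤ q) :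
    Lambda G H = 1 / (p : ℝ) :=
  solvable_domain_lambda_general G H p hp hdvd hex hmin
end

section
/- Let G be a finite group and H a finite solvable group. If G has no normal subgroup of index p for any prime p dividing gcd(|G|,|H|), then the only group homomorphism from G to H is the trivial homomorphism, i.e., |Hom(G,H)| = 1. -/
/-!
A nontrivial homomorphism `φ : G →* H` has a nontrivial solvable image. Such a group has a maximal
subgroup `M` containing its commutator subgroup; `M` is normal and the quotient by `M` is simple
and abelian, hence of prime order `p`. Pulling `M` back along `φ` gives a normal subgroup of `G` of
index `p`, and `p` divides both `|G|` and `|H|`.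
-/

theorem QuotientGroup.isSimpleOrder_subgroup_of_isCoatom {G : Type*} [Group G] {N : Subgroup G}
    [N.Normal] (hN : IsCoatom N) : IsSimpleOrder (Subgroup (G ⧸ N)) :=
  have : IsSimpleOrder (Set.Ici N) := Set.isSimpleOrder_Ici_iff_isCoatom.mpr hN
  OrderIso.isSimpleOrder (β := Set.Ici N) (QuotientGroup.comapMk'OrderIso N)

theorem QuotientGroup.isSimpleGroup_of_isCoatom {G : Type*} [Group G] {N : Subgroup G}
    [N.Normal] (hN : IsCoatom N) : IsSimpleGroup (G ⧸ N) :=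
  have := QuotientGroup.isSimpleOrder_subgroup_of_isCoatom hN
  have : Nontrivial (G ⧸ N) := Subgroup.nontrivial_iff.mp inferInstance
  ⟨fun K _ => IsSimpleOrder.eq_bot_or_eq_top K⟩

theorem Group.IsSolvable.exists_normal_index_prime (G : Type*) [Group G] [Finite G]
    [Nontrivial G] [Group.IsSolvable G] : ∃ K : Subgroup G, K.Normal ∧ K.index.Prime := by
  obtain ⟨M, hM, hcomm⟩ := (IsCoatomic.eq_top_or_exists_le_coatom (commutator G)).resolve_left
    (Group.IsSolvable.commutator_lt_top_of_nontrivial G).ne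
  have : M.Normal := Subgroup.Normal.of_commutator_le (G := G) hcomm
  have : IsMulCommutative (G ⧸ M) :=
    Subgroup.Normal.quotient_commutative_iff_commutator_le.mpr hcomm
  exact ⟨M, inferInstance, Group.is_simple_iff_prime_card.mp (QuotientGroup.isSimpleGroup_of_isCoatom hM)⟩

theorem MonoidHom.exists_normal_index_prime_dvd_card_of_ne_one {G H : Type*} [Group G] [Group H]
    [Finite H] [Group.IsSolvable H] {φ : G →* H} (hφ : φ ≠ 1) :
    ∃ K : Subgroup G, K.Normal ∧ K.index.Prime ∧ K.index ∣ Nat.card H := by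
  have : Nontrivial φ.range :=
    (Subgroup.nontrivial_iff_ne_bot _).mpr (mt MonoidHom.range_eq_bot_iff.mp hφ)
  obtain ⟨K, hK, hp⟩ := Group.IsSolvable.exists_normal_index_prime φ.range
  have hindex : (K.comap φ.rangeRestrict).index = K.index :=
    K.index_comap_of_surjective φ.rangeRestrict_surjective
  refine ⟨K.comap φ.rangeRestrict, hK.comap _, hindex ▸ hp, hindex ▸ ?_⟩
  exact K.index_dvd_card.trans (Subgroup.card_subgroup_dvd_card φ.range)

theorem solvable_codomain_no_normal_subgroup_trivial_hom_general
    (G H : Type*) [Group G] [Group H] [Finite H] [Group.IsSolvable H]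
    (h : ∀ p : ℕ, p.Prime → p ∣ Nat.gcd (Nat.card G) (Nat.card H) →
      ¬ ∃ K : Subgroup G, K.Normal ∧ K.index = p) :
    ∀ φ : G →* H, φ = 1 := by
  intro φ
  by_contra hφ
  obtain ⟨K, hK, hp, hdvd⟩ := φ.exists_normal_index_prime_dvd_card_of_ne_one hφ
  exact h K.index hp (Nat.dvd_gcd K.index_dvd_card hdvd) ⟨K, hK, rfl⟩

theorem solvable_codomain_no_normal_subgroup_trivial_hom
    (G H : Type*) [Group G] [Group H] [Finite G] [Finite H] [Group.IsSolvable H]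
    (h : ∀ p : ℕ, p.Prime → p ∣ Nat.gcd (Nat.card G) (Nat.card H) →
      ¬ ∃ K : Subgroup G, K.Normal ∧ K.index = p) :
    ∀ φ : G →* H, φ = 1 :=
  solvable_codomain_no_normal_subgroup_trivial_hom_general G H h
end

section
/- Let G and H be finite groups with H nontrivial, and let p be a prime. If G has a normal subgroup of index p and p divides |H|, then Λ_{G,H} ≥ 1/p. -/
lemma agr_le_one {G H : Type*} [Finite G] [Nonempty G] (f g : G → H) : agr f g ≤ 1 := by
  unfold agr
  have hpos : 0 < (Nat.card G : ℝ) := by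
    exact_mod_cast Nat.card_pos
  rw [div_le_one hpos]
  exact_mod_cast Nat.card_le_card_of_injective (Subtype.val : {x : G // f x = g x} → G)
    Subtype.val_injective

theorem lambda_ge_inv_p (G H : Type*) [Group G] [Group H]
    [Finite G] [Finite H] [Nontrivial H]
    (p : ℕ) (hp : p.Prime)
    (hex : ∃ K : Subgroup G, K.Normal ∧ K.index = p)
    (hdvd : p ∣ Nat.card H) :
    Lambda G H ≥ 1 / (p : ℝ) := by
  obtain ⟨K, hKn, hKi⟩ := hex
  haveI : Fact p.Prime := ⟨hp⟩
  haveI := Fintype.ofFinite H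
  obtain ⟨h, hh⟩ : ∃ h : H, orderOf h = p :=
    exists_prime_orderOf_dvd_card p (by rwa [← Nat.card_eq_fintype_card])
  have hq : Nat.card (G ⧸ K) = p := hKi
  have hz : Nat.card (Subgroup.zpowers h) = p := by
    rw [Nat.card_zpowers, hh]
  let e : G ⧸ K ≃* Subgroup.zpowers h := mulEquivOfPrimeCardEq hq hz
  let φ₀ : G →* H :=
    ((Subgroup.zpowers h).subtype.comp e.toMonoidHom).comp (QuotientGroup.mk' K)
  have hker : ∀ x : G, φ₀ x = 1 ↔ x ∈ K := by
    intro x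
    simp only [φ₀, MonoidHom.comp_apply, QuotientGroup.mk'_apply, Subgroup.coe_subtype]
    constructor
    · intro hx
      have : e (x : G ⧸ K) = 1 := Subtype.ext (by simpa using hx)
      have := (map_eq_one_iff e e.injective).mp this
      rwa [QuotientGroup.eq_one_iff] at this
    · intro hx
      have : (x : G ⧸ K) = 1 := (QuotientGroup.eq_one_iff x).mpr hx
      simp [this]
  have hφne : (⇑φ₀ : G → H) ≠ (fun _ => 1) := by
    intro hc
    have h1 : ∀ x : G, x ∈ K := fun x => (hker x).mp (congrFun hc x)
    have : K.index = 1 := Subgroup.index_eq_one.mpr ((Subgroup.eq_top_iff' K).mpr h1)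
    have := hp.one_lt
    omega
  have hcardeq : Nat.card {x : G // φ₀ x = (fun _ => (1:H)) x} = Nat.card K := by
    apply Nat.card_congr
    exact Equiv.subtypeEquivRight fun x => hker x
  have hagr : agr (⇑φ₀) (fun _ => (1:H)) = 1 / (p : ℝ) := by
    unfold agr
    rw [hcardeq]
    have hGK : Nat.card K * p = Nat.card G := by
      rw [← hKi]; exact Subgroup.card_mul_index K
    have hp0 : (p : ℝ) ≠ 0 := by exact_mod_cast hp.ne_zero
    have hG0 : (Nat.card G : ℝ) ≠ 0 := by exact_mod_cast Nat.card_pos.ne'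
    field_simp
    rw [← hGK]
    push_cast
    ring
  have hmem : (1 / (p : ℝ)) ∈ {r : ℝ | ∃ φ ψ : G → H,
      IsAffineHom φ ∧ IsAffineHom ψ ∧ φ ≠ ψ ∧ r = agr φ ψ} := by
    refine ⟨⇑φ₀, fun _ => 1, ⟨1, φ₀, fun g => (one_mul _).symm⟩,
      ⟨1, 1, fun g => by simp⟩, hφne, hagr.symm⟩
  have hbdd : BddAbove {r : ℝ | ∃ φ ψ : G → H,
      IsAffineHom φ ∧ IsAffineHom ψ ∧ φ ≠ ψ ∧ r = agr φ ψ} := by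
    refine ⟨1, fun r hr => ?_⟩
    obtain ⟨φ, ψ, _, _, _, rfl⟩ := hr
    exact agr_le_one φ ψ
  exact le_csSup hbdd hmem
end

section
/- Let G be a finite group, p a prime, and H a finite p-group. If Φ is a set of affine homomorphisms from G to H whose common equalizer Eq(Φ) = {x ∈ G : f(x) = g(x) for all f,g ∈ Φ} is nonempty, then |G|/|Eq(Φ)| is a power of p. In particular, if additionally H is nontrivial, then Λ_{G,H} ≤ 1/p. -/
open scoped Pointwise


private lemma key_card {G H : Type*} [Group G] [Group H] [Finite G] [Finite H]
    (p : ℕ) (hp : p.Prime) (hH : IsPGroup p H)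
    (Φ : Set (G → H)) (hΦ : ∀ f ∈ Φ, IsAffineHom f)
    (hne : {x : G | ∀ f ∈ Φ, ∀ g ∈ Φ, f x = g x}.Nonempty) :
    ∃ k : ℕ, Nat.card G =
      Nat.card {x : G | ∀ f ∈ Φ, ∀ g ∈ Φ, f x = g x} * p ^ k := by
  classical
  have hchoice : ∀ f : G → H, ∃ (h : H) (φ : G →* H), f ∈ Φ → ∀ g, f g = h * φ g := by
    intro f
    by_cases hf : f ∈ Φ
    · obtain ⟨h, φ, hs⟩ := hΦ f hf
      exact ⟨h, φ, fun _ => hs⟩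
    · exact ⟨1, 1, fun h => absurd h hf⟩
  choose A B hAB using hchoice
  set E := {x : G | ∀ f ∈ Φ, ∀ g ∈ Φ, f x = g x} with hEdef
  set K : Subgroup G := ⨅ f ∈ Φ, ⨅ g ∈ Φ, (B f).eqLocus (B g) with hKdef
  have hKmem : ∀ y : G, y ∈ K ↔ ∀ f ∈ Φ, ∀ g ∈ Φ, B f y = B g y := by
    intro y
    simp only [hKdef, Subgroup.mem_iInf]
    rfl
  obtain ⟨x₀, hx₀⟩ := hne
  have hEeq : E = x₀ • (K : Set G) := by
    ext x
    rw [Set.mem_smul_set_iff_inv_smul_mem]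
    simp only [smul_eq_mul, SetLike.mem_coe, hKmem]
    constructor
    · intro hx f hf g hg
      have e0 : A f * B f x₀ = A g * B g x₀ := by
        rw [← hAB f hf x₀, ← hAB g hg x₀]; exact hx₀ f hf g hg
      have e1 : A f * B f x = A g * B g x := by
        rw [← hAB f hf x, ← hAB g hg x]; exact hx f hf g hg
      rw [map_mul, map_inv, map_mul, map_inv]
      refine mul_left_cancel (a := A f * B f x₀) ?_
      calc (A f * B f x₀) * ((B f x₀)⁻¹ * B f x) = A f * B f x := by group
        _ = A g * B g x := e1
        _ = (A g * B g x₀) * ((B g x₀)⁻¹ * B g x) := by group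
        _ = (A f * B f x₀) * ((B g x₀)⁻¹ * B g x) := by rw [e0]
    · intro hx f hf g hg
      have e0 : A f * B f x₀ = A g * B g x₀ := by
        rw [← hAB f hf x₀, ← hAB g hg x₀]; exact hx₀ f hf g hg
      have hb := hx f hf g hg
      rw [map_mul, map_inv, map_mul, map_inv] at hb
      rw [hAB f hf x, hAB g hg x]
      calc A f * B f x = (A f * B f x₀) * ((B f x₀)⁻¹ * B f x) := by group
        _ = (A f * B f x₀) * ((B g x₀)⁻¹ * B g x) := by rw [hb]
        _ = (A g * B g x₀) * ((B g x₀)⁻¹ * B g x) := by rw [e0]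
        _ = A g * B g x := by group
  have hcardE : Nat.card E = Nat.card K := by
    rw [Nat.card_coe_set_eq, hEeq, Set.ncard_smul_set, ← Nat.card_coe_set_eq]
    rfl
  have hmulindex := K.card_mul_index
  have hG0 : (Nat.card G : ℕ) ≠ 0 := Nat.card_pos.ne'
  have hidx0 : K.index ≠ 0 := by
    intro h
    rw [h, mul_zero] at hmulindex
    exact hG0 hmulindex.symm
  have hq : ∀ {q : ℕ}, q.Prime → q ∣ K.index → q = p := by
    intro q hqp hdvd
    by_contra hqne
    haveI : Fact q.Prime := ⟨hqp⟩
    obtain ⟨Q⟩ : Nonempty (Sylow q G) := inferInstance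
    have hQK : Q.toSubgroup ≤ K := by
      intro x hxQ
      obtain ⟨m, hm⟩ := Q.isPGroup' ⟨x, hxQ⟩
      have hm' : x ^ q ^ m = 1 := by
        have := congrArg (Subtype.val) hm
        simpa using this
      have hone : ∀ C : G →* H, C x = 1 := by
        intro C
        have h1 : (C x) ^ q ^ m = 1 := by rw [← map_pow, hm', map_one]
        obtain ⟨l, hl⟩ := hH (C x)
        have hco : Nat.Coprime (q ^ m) (p ^ l) :=
          ((Nat.coprime_primes hqp hp).mpr hqne).pow _ _
        have hd1 : orderOf (C x) ∣ q ^ m := orderOf_dvd_of_pow_eq_one h1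
        have hd2 : orderOf (C x) ∣ p ^ l := orderOf_dvd_of_pow_eq_one hl
        have : orderOf (C x) = 1 :=
          Nat.eq_one_of_dvd_coprimes hco hd1 hd2
        exact orderOf_eq_one_iff.mp this
      rw [hKmem]
      intro f hf g hg
      rw [hone (B f), hone (B g)]
    have hQcard : Nat.card Q.toSubgroup ∣ Nat.card K :=
      Subgroup.card_dvd_of_le hQK
    rw [Sylow.card_eq_multiplicity Q] at hQcard
    have hdd : q ^ ((Nat.card G).factorization q + 1) ∣ Nat.card ↥K * K.index := by
      rw [pow_succ]
      exact mul_dvd_mul hQcard hdvd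
    rw [hmulindex] at hdd
    exact Nat.pow_succ_factorization_not_dvd hG0 hqp hdd
  have := Nat.eq_prime_pow_of_unique_prime_dvd (p := p) hidx0 (fun hd hdvd => hq hd hdvd)
  refine ⟨K.index.primeFactorsList.length, ?_⟩
  rw [← hmulindex, hcardE]
  exact congrArg (fun n => Nat.card ↥K * n) this

private lemma agr_le_aux {G H : Type*} [Group G] [Group H] [Finite G] [Finite H]
    (p : ℕ) (hp : p.Prime) (hH : IsPGroup p H)
    (φ ψ : G → H) (hφ : IsAffineHom φ) (hψ : IsAffineHom ψ) (hne : φ ≠ ψ) :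
    agr φ ψ ≤ 1 / (p : ℝ) := by
  classical
  have hp0 : (0:ℝ) < p := by exact_mod_cast hp.pos
  by_cases hE : {x : G | φ x = ψ x}.Nonempty
  · have hset : {x : G | ∀ f ∈ ({φ, ψ} : Set (G → H)), ∀ g ∈ ({φ, ψ} : Set (G → H)), f x = g x}
        = {x : G | φ x = ψ x} := by
      ext x
      simp only [Set.mem_setOf_eq, Set.mem_insert_iff, Set.mem_singleton_iff]
      constructor
      · intro h
        exact h φ (Or.inl rfl) ψ (Or.inr rfl)
      · intro h f hf g hg
        rcases hf with rfl | rfl <;> rcases hg with rfl | rfl <;>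
          first | rfl | exact h | exact h.symm
    obtain ⟨k, hk⟩ := key_card p hp hH {φ, ψ}
      (by
        intro f hf
        simp only [Set.mem_insert_iff, Set.mem_singleton_iff] at hf
        rcases hf with rfl | rfl
        exacts [hφ, hψ])
      (by rw [hset]; exact hE)
    rw [hset] at hk
    have hk1 : k ≠ 0 := by
      rintro rfl
      rw [pow_zero, mul_one] at hk
      have : {x : G | φ x = ψ x} = Set.univ :=
        Set.eq_of_subset_of_ncard_le (Set.subset_univ _)
          (le_of_eq (by rw [Set.ncard_univ, ← Nat.card_coe_set_eq]; exact hk))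
      exact hne (funext fun x => (this ▸ Set.mem_univ x : x ∈ {x : G | φ x = ψ x}))
    have hcE : Nat.card {x : G // φ x = ψ x} = Nat.card {x : G | φ x = ψ x} := rfl
    have hcE0 : (0:ℝ) < Nat.card {x : G | φ x = ψ x} := by
      have : Nonempty ↥{x : G | φ x = ψ x} := hE.to_subtype
      exact_mod_cast Nat.card_pos
    rw [agr, hcE]
    have hkR : (Nat.card G : ℝ) = Nat.card {x : G | φ x = ψ x} * (p:ℝ) ^ k := by
      exact_mod_cast hk
    rw [hkR, div_mul_cancel_left₀ hcE0.ne']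
    rw [← one_div]
    apply one_div_le_one_div_of_le hp0
    calc (p:ℝ) = (p:ℝ) ^ 1 := (pow_one _).symm
      _ ≤ (p:ℝ) ^ k := pow_le_pow_right₀ (by exact_mod_cast hp.one_lt.le) (Nat.one_le_iff_ne_zero.mpr hk1)
  · have : IsEmpty {x : G // φ x = ψ x} := ⟨fun x => hE ⟨x.1, x.2⟩⟩
    rw [agr, Nat.card_of_isEmpty, Nat.cast_zero, zero_div]
    positivity

theorem index_of_equalizer_to_p_group (G H : Type*) [Group G] [Group H]
    [Finite G] [Finite H] (p : ℕ) (hp : p.Prime) (hH : IsPGroup p H)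
    (Φ : Set (G → H)) (hΦ : ∀ f ∈ Φ, IsAffineHom f)
    (hne : {x : G | ∀ f ∈ Φ, ∀ g ∈ Φ, f x = g x}.Nonempty) :
    (∃ k : ℕ, Nat.card G =
      Nat.card {x : G | ∀ f ∈ Φ, ∀ g ∈ Φ, f x = g x} * p ^ k) ∧
    (Nontrivial H → Lambda G H ≤ 1 / (p : ℝ)) := by
  constructor
  · exact key_card p hp hH Φ hΦ hne
  · intro _
    apply Real.sSup_le
    · rintro r ⟨φ, ψ, hφ, hψ, hne', rfl⟩
      exact agr_le_aux p hp hH φ ψ hφ hψ hne'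
    · positivity
end

section
/- Let G and H be finite groups with H nontrivial, and suppose G = G₁ ⋈ G₂ is an (internal) Zappa–Szép product of subgroups G₁, G₂ ≤ G (i.e., G₁ ∩ G₂ = {1} and G₁G₂ = G), where the only group homomorphism from G₂ to H is trivial. Then every affine homomorphism φ : G → H satisfies φ(xy) = ψ(x) for all x ∈ G₁, y ∈ G₂, for some affine homomorphism ψ : G₁ → H. In particular, Λ_{G,H} ≤ Λ_{G₁,H}. -/
theorem zappa_szep_coprime_lambda (G H : Type*) [Group G] [Group H]
    [Finite G] [Finite H] [Nontrivial H]
    (G₁ G₂ : Subgroup G) (hint : G₁ ⊓ G₂ = ⊥)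
    (hmul : ∀ g : G, ∃ x ∈ G₁, ∃ y ∈ G₂, g = x * y)
    (htriv : ∀ φ : G₂ →* H, φ = 1) :
    (∀ φ : G → H, IsAffineHom φ → ∃ ψ : G₁ → H, IsAffineHom ψ ∧
      ∀ (x : G₁) (y : G₂), φ ((x : G) * (y : G)) = ψ x) ∧
    Lambda G H ≤ Lambda G₁ H := by
  -- key: any affine hom kills the G₂ part
  have key : ∀ φ : G → H, IsAffineHom φ → ∀ (x : G₁) (y : G₂),
      φ ((x : G) * (y : G)) = φ (x : G) := by
    rintro φ ⟨h, φ₀, hφ⟩ x y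
    have h1 : φ₀.comp G₂.subtype = 1 := htriv _
    have h2 : φ₀ (y : G) = 1 := by
      have := DFunLike.congr_fun h1 y
      simpa using this
    simp [hφ, map_mul, h2]
  -- part 1
  have part1 : ∀ φ : G → H, IsAffineHom φ → ∃ ψ : G₁ → H, IsAffineHom ψ ∧
      ∀ (x : G₁) (y : G₂), φ ((x : G) * (y : G)) = ψ x := by
    intro φ hφ
    refine ⟨fun x => φ (x : G), ?_, fun x y => key φ hφ x y⟩
    obtain ⟨h, φ₀, hφ₀⟩ := hφ
    exact ⟨h, φ₀.comp G₁.subtype, fun x => hφ₀ x⟩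
  refine ⟨part1, ?_⟩
  -- multiplication map is a bijection
  have bij : Function.Bijective (fun p : G₁ × G₂ => (p.1 : G) * (p.2 : G)) := by
    constructor
    · rintro ⟨x, y⟩ ⟨x', y'⟩ hxy
      simp only at hxy
      have hx : (x' : G)⁻¹ * x = (y' : G) * (y : G)⁻¹ := by
        apply mul_right_cancel (b := (y : G))
        simp [mul_assoc, hxy]
      have hm1 : (x' : G)⁻¹ * x ∈ G₁ := mul_mem (inv_mem x'.2) x.2
      have hm2 : (x' : G)⁻¹ * x ∈ G₂ := hx ▸ mul_mem y'.2 (inv_mem y.2)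
      have hbot : (x' : G)⁻¹ * x ∈ (⊥ : Subgroup G) := hint ▸ ⟨hm1, hm2⟩
      have h1 : (x' : G)⁻¹ * x = 1 := hbot
      have hxx : (x : G) = x' := by
        rwa [inv_mul_eq_one, eq_comm] at h1
      have hyy : (y : G) = y' := by
        have h2 : (y' : G) * (y : G)⁻¹ = 1 := hx ▸ h1
        rwa [mul_inv_eq_one, eq_comm] at h2
      exact Prod.ext (Subtype.ext hxx) (Subtype.ext hyy)
    · intro g
      obtain ⟨x, hx, y, hy, rfl⟩ := hmul g
      exact ⟨(⟨x, hx⟩, ⟨y, hy⟩), rfl⟩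
  have cardG : (Nat.card G : ℝ) = (Nat.card G₁ : ℝ) * (Nat.card G₂ : ℝ) := by
    rw [show Nat.card G = Nat.card ↥G₁ * Nat.card ↥G₂ from by
      rw [← Nat.card_prod]; exact (Nat.card_eq_of_bijective _ bij).symm]
    push_cast; ring
  have cardG₂pos : (0 : ℝ) < Nat.card G₂ := by
    exact_mod_cast Nat.card_pos
  have cardGpos : (0 : ℝ) < Nat.card G := by
    exact_mod_cast Nat.card_pos
  have cardG₁pos : (0 : ℝ) < Nat.card G₁ := by
    exact_mod_cast Nat.card_pos
  -- agreement transfer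
  have agr_eq : ∀ φ ψ : G → H, IsAffineHom φ → IsAffineHom ψ →
      agr φ ψ = agr (fun x : G₁ => φ (x : G)) (fun x : G₁ => ψ (x : G)) := by
    intro φ ψ hφ hψ
    have e0 : {p : G₁ × G₂ // φ (p.1 : G) = ψ (p.1 : G)} ≃ {g : G // φ g = ψ g} :=
      (Equiv.ofBijective _ bij).subtypeEquiv (fun p => by
        simp only [Equiv.ofBijective_apply]
        rw [key φ hφ p.1 p.2, key ψ hψ p.1 p.2])
    have e2 : {p : G₁ × G₂ // φ (p.1 : G) = ψ (p.1 : G)}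
        ≃ {x : G₁ // φ (x : G) = ψ (x : G)} × G₂ :=
      { toFun := fun p => (⟨p.1.1, p.2⟩, p.1.2)
        invFun := fun z => ⟨(z.1.1, z.2), z.1.2⟩
        left_inv := by rintro ⟨⟨x, y⟩, h⟩; rfl
        right_inv := by rintro ⟨⟨x, h⟩, y⟩; rfl }
    have e1 : {g : G // φ g = ψ g} ≃ {x : G₁ // φ (x : G) = ψ (x : G)} × G₂ :=
      e0.symm.trans e2
    have : (Nat.card {g : G // φ g = ψ g} : ℝ)
        = (Nat.card {x : G₁ // φ (x : G) = ψ (x : G)} : ℝ) * Nat.card G₂ := by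
      rw [Nat.card_congr e1, Nat.card_prod]; push_cast; ring
    unfold agr
    rw [this, cardG]
    field_simp
  -- Lambda G₁ H is bounded above by 1
  have bdd : BddAbove {r : ℝ | ∃ φ ψ : G₁ → H,
      IsAffineHom φ ∧ IsAffineHom ψ ∧ φ ≠ ψ ∧ r = agr φ ψ} := by
    refine ⟨1, ?_⟩
    rintro r ⟨φ, ψ, _, _, _, rfl⟩
    unfold agr
    rw [div_le_one cardG₁pos]
    exact_mod_cast Nat.card_le_card_of_injective _ Subtype.val_injective
  -- Lambda G₁ H ≥ 0
  have lam_nonneg : 0 ≤ Lambda G₁ H := by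
    obtain ⟨h, hh⟩ := exists_ne (1 : H)
    have mem : agr (fun _ : G₁ => (1 : H)) (fun _ : G₁ => h) ∈ {r : ℝ | ∃ φ ψ : G₁ → H,
        IsAffineHom φ ∧ IsAffineHom ψ ∧ φ ≠ ψ ∧ r = agr φ ψ} := by
      refine ⟨_, _, ⟨1, 1, by simp⟩, ⟨h, 1, by simp⟩, ?_, rfl⟩
      intro heq
      exact hh (congrFun heq 1).symm
    have h0 : 0 ≤ agr (fun _ : G₁ => (1 : H)) (fun _ : G₁ => h) := by
      unfold agr; positivity
    exact h0.trans (le_csSup bdd mem)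
  refine Real.sSup_le ?_ lam_nonneg
  rintro r ⟨φ, ψ, hφ, hψ, hne, rfl⟩
  have hne1 : (fun x : G₁ => φ (x : G)) ≠ (fun x : G₁ => ψ (x : G)) := by
    intro heq
    apply hne
    funext g
    obtain ⟨x, hx, y, hy, rfl⟩ := hmul g
    have := congrFun heq ⟨x, hx⟩
    simp only at this
    rw [show x * y = ((⟨x, hx⟩ : G₁) : G) * ((⟨y, hy⟩ : G₂) : G) from rfl,
      key φ hφ, key ψ hψ, this]
  rw [agr_eq φ ψ hφ hψ]
  exact le_csSup bdd ⟨_, _, ⟨hφ.choose, (hφ.choose_spec).choose.comp G₁.subtype,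
    fun x => (hφ.choose_spec).choose_spec x⟩, ⟨hψ.choose, (hψ.choose_spec).choose.comp G₁.subtype,
    fun x => (hψ.choose_spec).choose_spec x⟩, hne1, rfl⟩
end
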